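/- arXiv:1712.00409 — 3 statements merged into one kernel-verified Lean document; each statement's English description precedes it below -/
import Mathlib

section
/- The expected total loss of the counting estimator trained on i iid fair coin flips satisfies the exact asymptotic √(2πi) · E_i → 1 as i → ∞; that is, the limit of √(2πi) · E_i over all positive integers i equals 1, so E_i ~ (2πi)^(−1/2). -/
open Finset Real Filter
open scoped Nat Topology

/-!
The signed terms `C(N, k) (N - 2k)` telescope: their partial sums are `N C(N - 1, K)`. Over all
`k` they sum to `0`, so the sum of their absolute values is twice the partial sum up to
`K = ⌊(N - 1) / 2⌋`, and `E_N = C(N - 1, ⌊(N - 1) / 2⌋) / 2 ^ N`. This is `C(2m, m) / 2 ^ (2m + 1)`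
for `N = 2m + 1` and `C(2m + 2, m + 1) / 2 ^ (2m + 3)` for `N = 2m + 2`, and Wallis' product
gives `C(2m, m) ~ 4 ^ m / √(π m)`.
-/

/-- Expected total loss of the counting estimator trained on `i` iid fair coin flips. -/
noncomputable def countingLoss (i : ℕ) : ℝ :=
  2 ^ (-(i : ℝ)) * ∑ k ∈ Finset.range (i + 1), (Nat.choose i k : ℝ) * |(k : ℝ) / i - 1 / 2|

theorem Filter.Tendsto.of_comp_two_mul_of_comp_two_mul_add_one {α : Type*} {f : ℕ → α}
    {l : Filter α} (he : Tendsto (fun n => f (2 * n)) atTop l)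
    (ho : Tendsto (fun n => f (2 * n + 1)) atTop l) : Tendsto f atTop l := by
  intro s hs
  obtain ⟨a, ha⟩ := eventually_atTop.1 (he hs)
  obtain ⟨b, hb⟩ := eventually_atTop.1 (ho hs)
  refine eventually_atTop.2 ⟨2 * (a + b), fun n hn => ?_⟩
  obtain ⟨k, rfl | rfl⟩ := Nat.even_or_odd' n
  · exact ha k (by omega)
  · exact hb k (by omega)

theorem Nat.sum_range_choose_mul_sub_two_mul {R : Type*} [CommRing R] (n K : ℕ) :
    ∑ k ∈ range (K + 1), ((n + 1).choose k : R) * (n + 1 - 2 * k) = (n + 1) * n.choose K := by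
  induction K with
  | zero => simp
  | succ K ih =>
    have hpascal : ((n + 1).choose (K + 1) : R) = n.choose K + n.choose (K + 1) := by
      rw [Nat.choose_succ_succ', Nat.cast_add]
    have habsorb : ((n : R) + 1) * n.choose K = (n + 1).choose (K + 1) * ((K : R) + 1) := by
      exact_mod_cast congrArg (Nat.cast : ℕ → R) (Nat.add_one_mul_choose_eq n K)
    rw [sum_range_succ, ih]
    push_cast
    linear_combination (n + 1 : R) * hpascal + 2 * habsorb

theorem Nat.sum_range_choose_mul_abs_sub_two_mul {R : Type*} [CommRing R] [LinearOrder R]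
    [IsStrictOrderedRing R] (n : ℕ) :
    ∑ k ∈ range (n + 2), ((n + 1).choose k : R) * |(n + 1 : R) - 2 * k|
      = 2 * (n + 1) * n.choose (n / 2) := by
  have hsplit : n / 2 + 1 ≤ n + 2 := by omega
  have htotal := Nat.sum_range_choose_mul_sub_two_mul (R := R) n (n + 1)
  rw [Nat.choose_succ_self, Nat.cast_zero, mul_zero,
    ← sum_range_add_sum_Ico _ hsplit, Nat.sum_range_choose_mul_sub_two_mul] at htotal
  have hlow : ∑ k ∈ range (n / 2 + 1), ((n + 1).choose k : R) * |(n + 1 : R) - 2 * k|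
      = ∑ k ∈ range (n / 2 + 1), ((n + 1).choose k : R) * ((n + 1 : R) - 2 * k) := by
    refine sum_congr rfl fun k hk => ?_
    have hk' : (2 * k : R) ≤ n + 1 := by
      exact_mod_cast (by have := mem_range.1 hk; omega : 2 * k ≤ n + 1)
    rw [abs_of_nonneg (sub_nonneg.2 hk')]
  have hhigh : ∑ k ∈ Ico (n / 2 + 1) (n + 2), ((n + 1).choose k : R) * |(n + 1 : R) - 2 * k|
      = -∑ k ∈ Ico (n / 2 + 1) (n + 2), ((n + 1).choose k : R) * ((n + 1 : R) - 2 * k) := by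
    rw [← sum_neg_distrib]
    refine sum_congr rfl fun k hk => ?_
    have hk' : (n + 1 : R) ≤ 2 * k := by
      exact_mod_cast (by have := (mem_Ico.1 hk).1; omega : n + 1 ≤ 2 * k)
    rw [abs_of_nonpos (sub_nonpos.2 hk'), mul_neg]
  rw [← sum_range_add_sum_Ico _ hsplit, hlow, hhigh, Nat.sum_range_choose_mul_sub_two_mul]
  linear_combination -htotal

theorem Nat.factorial_two_mul_eq_centralBinom_mul (m : ℕ) :
    (2 * m)! = m.centralBinom * m ! * m ! := by
  rw [Nat.centralBinom_eq_two_mul_choose, two_mul, Nat.add_choose_mul_factorial_mul_factorial]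

theorem Nat.centralBinom_succ (m : ℕ) : (m + 1).centralBinom = 2 * (2 * m + 1).choose m := by
  rw [Nat.centralBinom_eq_two_mul_choose, show 2 * (m + 1) = 2 * m + 1 + 1 by ring,
    Nat.choose_succ_succ', Nat.choose_symm_half, ← two_mul]

theorem sq_sqrt_pi_mul_centralBinom_div_four_pow (m : ℕ) :
    (√(π * m) * m.centralBinom / 4 ^ m) ^ 2 = π * (m / (2 * m + 1)) / Real.Wallis.W m := by
  have hpow : (2 : ℝ) ^ (4 * m) = (4 ^ m) ^ 2 := by
    rw [← pow_mul, show (4 : ℝ) = 2 ^ 2 by norm_num, ← pow_mul]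
    ring_nf
  rw [Real.Wallis.W_eq_factorial_ratio, Nat.factorial_two_mul_eq_centralBinom_mul, hpow, div_pow,
    mul_pow, sq_sqrt (by positivity)]
  push_cast
  field_simp

theorem tendsto_sqrt_pi_mul_centralBinom_div_four_pow :
    Tendsto (fun m : ℕ => √(π * m) * m.centralBinom / 4 ^ m) atTop (𝓝 1) := by
  have hsquare : Tendsto (fun m : ℕ => π * (m / (2 * m + 1)) / Real.Wallis.W m) atTop (𝓝 1) := by
    have := (Stirling.tendsto_self_div_two_mul_self_add_one.const_mul π).div
      Real.Wallis.tendsto_W_nhds_pi_div_two (by positivity)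
    rwa [mul_one_div, div_self (by positivity)] at this
  have hsqrt := hsquare.sqrt
  rw [sqrt_one] at hsqrt
  refine hsqrt.congr fun m => ?_
  rw [← sq_sqrt_pi_mul_centralBinom_div_four_pow, sqrt_sq (by positivity)]

theorem countingLoss_succ (n : ℕ) : countingLoss (n + 1) = n.choose (n / 2) / 2 ^ (n + 1) := by
  have habs : ∀ k : ℕ,
      |(k : ℝ) / (n + 1 : ℕ) - 1 / 2| = |(n + 1 : ℝ) - 2 * k| / (2 * (n + 1)) := by
    intro k
    rw [show (k : ℝ) / (n + 1 : ℕ) - 1 / 2 = -(((n + 1 : ℝ) - 2 * k) / (2 * (n + 1))) by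
        push_cast; field_simp; ring,
      abs_neg, abs_div, abs_of_pos (by positivity : (0 : ℝ) < 2 * (n + 1))]
  simp_rw [countingLoss, habs, ← mul_div_assoc, ← sum_div, Nat.cast_add_one,
    Nat.sum_range_choose_mul_abs_sub_two_mul]
  rw [rpow_neg (by norm_num), ← Nat.cast_add_one, rpow_natCast]
  field_simp

theorem sqrt_mul_countingLoss_two_mul_add_one {m : ℕ} (hm : m ≠ 0) :
    √(2 * π * ((2 * m + 1 : ℕ) : ℝ)) * countingLoss (2 * m + 1)
      = √(π * m) * m.centralBinom / 4 ^ m * √(1 + (2 * m : ℝ)⁻¹) := by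
  rw [countingLoss_succ, Nat.mul_div_cancel_left m two_pos, ← Nat.centralBinom_eq_two_mul_choose,
    show 2 * π * ((2 * m + 1 : ℕ) : ℝ) = 2 ^ 2 * (π * m) * (1 + (2 * m : ℝ)⁻¹) by
      push_cast; field_simp,
    sqrt_mul (by positivity), sqrt_mul (by positivity), sqrt_sq two_pos.le, pow_succ, pow_mul]
  ring

theorem sqrt_mul_countingLoss_two_mul_add_two (m : ℕ) :
    √(2 * π * ((2 * m + 2 : ℕ) : ℝ)) * countingLoss (2 * m + 2)
      = √(π * (m + 1 : ℕ)) * (m + 1).centralBinom / 4 ^ (m + 1) := by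
  rw [countingLoss_succ, show (2 * m + 1) / 2 = m by omega, Nat.centralBinom_succ,
    show 2 * π * ((2 * m + 2 : ℕ) : ℝ) = 2 ^ 2 * (π * (m + 1 : ℕ)) by push_cast; ring,
    sqrt_mul (by positivity), sqrt_sq two_pos.le, show 2 * m + 1 + 1 = 2 * (m + 1) by ring,
    pow_mul]
  push_cast
  ring

theorem counting_loss_asymptotic :
    Tendsto (fun i : ℕ => Real.sqrt (2 * Real.pi * i) * countingLoss i) atTop (nhds 1) := by
  have hcorrection : Tendsto (fun m : ℕ => √(1 + (2 * m : ℝ)⁻¹)) atTop (𝓝 1) := by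
    have h := (tendsto_natCast_atTop_atTop.const_mul_atTop (two_pos : (0 : ℝ) < 2))
    simpa using (h.inv_tendsto_atTop.const_add 1).sqrt
  rw [← tendsto_add_atTop_iff_nat 1]
  refine Tendsto.of_comp_two_mul_of_comp_two_mul_add_one ?_ ?_
  · have h := tendsto_sqrt_pi_mul_centralBinom_div_four_pow.mul hcorrection
    rw [one_mul] at h
    exact h.congr' ((eventually_ne_atTop 0).mono fun m hm =>
      (sqrt_mul_countingLoss_two_mul_add_one hm).symm)
  · exact ((tendsto_add_atTop_iff_nat 1).2 tendsto_sqrt_pi_mul_centralBinom_div_four_pow).congr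
      fun m => (sqrt_mul_countingLoss_two_mul_add_two m).symm
end

section
/- For every odd positive integer i, the expected total loss of the counting estimator has the closed form E_i = C(i−1, (i−1)/2) / 2^i, where C(i−1, (i−1)/2) is the central binomial coefficient of i−1. -/
open Finset Real

/-!
Write `n = 2m + 1`. Since `|k/n - 1/2| = |n - 2k| / (2n)`, it suffices to compute
`∑ₖ C(n,k) |n - 2k|`. The summand is invariant under `k ↦ n - k`, so the sum is twice the sum over
`k ≤ m`, where `n - 2k > 0`. There `(n - 2k) C(n,k) = (k+1) C(n,k+1) - k C(n,k)` telescopes to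
`(m+1) C(n,m+1) = n C(2m,m)`.
-/

theorem Finset.sum_range_two_mul_add_two_of_reflect {M : Type*} [AddCommMonoid M] (f : ℕ → M)
    (m : ℕ) (hf : ∀ k ≤ m, f (2 * m + 1 - k) = f k) :
    ∑ k ∈ range (2 * m + 2), f k = 2 • ∑ k ∈ range (m + 1), f k := by
  have h_upper : ∑ k ∈ range (m + 1), f (m + 1 + k) = ∑ k ∈ range (m + 1), f k := by
    rw [← sum_range_reflect f (m + 1)]
    refine sum_congr rfl fun k hk => ?_
    have hk : k ≤ m := Nat.lt_succ_iff.mp (mem_range.mp hk)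
    rw [Nat.add_sub_cancel, ← hf (m - k) (Nat.sub_le m k)]
    congr 1
    omega
  rw [show 2 * m + 2 = (m + 1) + (m + 1) by ring, sum_range_add, h_upper, two_nsmul]

theorem Nat.sub_two_mul_mul_choose_eq (n k : ℕ) :
    ((n : ℤ) - 2 * k) * n.choose k = ((k : ℤ) + 1) * n.choose (k + 1) - k * n.choose k := by
  have h := congrArg (Nat.cast : ℕ → ℤ) (Nat.choose_succ_right_eq n k)
  rcases le_or_gt k n with hkn | hnk
  · push_cast [hkn] at h
    linear_combination -h
  · simp [Nat.choose_eq_zero_of_lt hnk, Nat.choose_eq_zero_of_lt (Nat.lt_succ_of_lt hnk)]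

theorem Nat.sum_range_sub_two_mul_mul_choose (n m : ℕ) :
    ∑ k ∈ range (m + 1), ((n : ℤ) - 2 * k) * n.choose k = ((m : ℤ) + 1) * n.choose (m + 1) := by
  simp_rw [Nat.sub_two_mul_mul_choose_eq]
  have h := sum_range_sub (fun k : ℕ => (k : ℤ) * n.choose k) (m + 1)
  push_cast at h
  simpa using h

theorem Nat.sum_range_choose_mul_abs_sub_two_mul_of_odd (m : ℕ) :
    ∑ k ∈ range (2 * m + 2), ((2 * m + 1).choose k : ℤ) * |((2 * m + 1 : ℕ) : ℤ) - 2 * k|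
      = 2 * (2 * m + 1 : ℕ) * (2 * m).choose m := by
  rw [sum_range_two_mul_add_two_of_reflect]
  · have h_central := congrArg (Nat.cast : ℕ → ℤ) (Nat.add_one_mul_choose_eq (2 * m) m)
    push_cast at h_central
    have h_lower : ∀ k ∈ range (m + 1), ((2 * m + 1).choose k : ℤ) * |((2 * m + 1 : ℕ) : ℤ) - 2 * k|
        = (((2 * m + 1 : ℕ) : ℤ) - 2 * k) * (2 * m + 1).choose k := by
      intro k hk
      have hk : k ≤ m := Nat.lt_succ_iff.mp (mem_range.mp hk)
      rw [abs_of_nonneg (by push_cast; omega), mul_comm]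
    rw [sum_congr rfl h_lower, Nat.sum_range_sub_two_mul_mul_choose, nsmul_eq_mul]
    push_cast
    linear_combination -2 * h_central
  · intro k hk
    rw [Nat.choose_symm (by omega), Nat.cast_sub (by omega), ← abs_neg]
    push_cast
    ring_nf

theorem countingLoss_eq_sum_choose_mul_abs_sub_two_mul {i : ℕ} (hi : i ≠ 0) :
    countingLoss i
      = (∑ k ∈ range (i + 1), (i.choose k : ℤ) * |(i : ℤ) - 2 * k| : ℤ) / (2 * i * 2 ^ i) := by
  have hi' : (i : ℝ) ≠ 0 := Nat.cast_ne_zero.mpr hi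
  have h_abs (k : ℕ) : |(k : ℝ) / i - 1 / 2| = |(i : ℝ) - 2 * k| / (2 * i) := by
    have h : (k : ℝ) / i - 1 / 2 = -(((i : ℝ) - 2 * k) / (2 * i)) := by
      field_simp
      ring
    rw [h, abs_neg, abs_div, abs_of_pos (by positivity : (0 : ℝ) < 2 * i)]
  simp only [countingLoss, h_abs, rpow_neg zero_le_two, rpow_natCast, ← mul_div_assoc,
    ← sum_div]
  push_cast
  field_simp

theorem counting_loss_odd_closed_form_general (i : ℕ) (hodd : Odd i) :
    countingLoss i = (Nat.choose (i - 1) ((i - 1) / 2) : ℝ) / 2 ^ i := by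
  obtain ⟨m, rfl⟩ := hodd
  rw [countingLoss_eq_sum_choose_mul_abs_sub_two_mul (by omega),
    Nat.sum_range_choose_mul_abs_sub_two_mul_of_odd, Nat.add_sub_cancel,
    Nat.mul_div_cancel_left m two_pos]
  push_cast
  field_simp

theorem counting_loss_odd_closed_form (i : ℕ) (hi : 0 < i) (hodd : Odd i) :
    countingLoss i = (Nat.choose (i - 1) ((i - 1) / 2) : ℝ) / 2 ^ i :=
  counting_loss_odd_closed_form_general i hodd
end

section
/- For every even positive integer i, the expected total loss of the counting estimator does not change when one more training sample is added: E_i = E_{i+1}. -/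
/-!
Write `n + 1` for the sample size. Since `|k/(n+1) - 1/2| = |n + 1 - 2k| / (2(n+1))`, everything rests
on the weighted sums `∑ C(n+1, k) (n + 1 - 2k)`. Their partial sums telescope to `(n+1) C(n, j)`, and
the full sum vanishes, so the absolute sum is twice the partial sum up to the middle index; this gives
`E_{n+1} = C(n, ⌊(n+1)/2⌋) / 2^(n+1)`. For `n + 1 = 2m` both `E_{2m}` and `E_{2m+1}` reduce to
`C(2m-1, m) / 4^m` because `C(2m, m) = 2 C(2m-1, m)`.
-/

open Finset Real

namespace Nat

theorem sum_range_choose_mul_sub_two_mul_s4 {R : Type*} [CommRing R] (n j : ℕ) :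
    ∑ k ∈ range (j + 1), ((n + 1).choose k : R) * ((n + 1 : R) - 2 * k) =
      (n + 1 : R) * n.choose j := by
  induction j with
  | zero => simp
  | succ j ih =>
    have pascal : ((n + 1).choose (j + 1) : R) = n.choose j + n.choose (j + 1) := by
      rw [choose_succ_succ', cast_add]
    have absorb : (n + 1 : R) * n.choose j = (n + 1).choose (j + 1) * (j + 1) := by
      simpa using congrArg (Nat.cast (R := R)) (add_one_mul_choose_eq n j)
    rw [sum_range_succ, ih]
    push_cast
    linear_combination (n + 1 : R) * pascal + 2 * absorb

theorem sum_range_choose_mul_abs_sub_two_mul_s4 {R : Type*} [CommRing R] [LinearOrder R]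
    [IsStrictOrderedRing R] (n : ℕ) :
    ∑ k ∈ range (n + 2), ((n + 1).choose k : R) * |(n + 1 : R) - 2 * k| =
      2 * ((n + 1 : R) * n.choose ((n + 1) / 2)) := by
  set f : ℕ → R := fun k ↦ ((n + 1).choose k : R) * ((n + 1 : R) - 2 * k)
  set m := (n + 1) / 2
  have hm : m + 1 ≤ n + 2 := by omega
  have total : ∑ k ∈ range (n + 2), f k = 0 := by
    simp [f, sum_range_choose_mul_sub_two_mul_s4]
  have low : ∀ k ∈ range (m + 1), ((n + 1).choose k : R) * |(n + 1 : R) - 2 * k| = f k := by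
    intro k hk
    have : (2 * k : R) ≤ n + 1 := by simp only [mem_range] at hk; exact_mod_cast (by omega)
    rw [abs_of_nonneg (sub_nonneg.2 this)]
  have high : ∀ k ∈ Ico (m + 1) (n + 2),
      ((n + 1).choose k : R) * |(n + 1 : R) - 2 * k| = -f k := by
    intro k hk
    have : (n + 1 : R) < 2 * k := by simp only [mem_Ico] at hk; exact_mod_cast (by omega)
    rw [abs_of_neg (sub_neg.2 this)]
    ring
  rw [← sum_range_add_sum_Ico _ hm, sum_congr rfl low, sum_congr rfl high, sum_neg_distrib,
    ← sum_range_choose_mul_sub_two_mul_s4 n m]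
  rw [← sum_range_add_sum_Ico _ hm] at total
  linear_combination -total

end Nat

theorem countingLoss_add_one (n : ℕ) :
    countingLoss (n + 1) = n.choose ((n + 1) / 2) / 2 ^ (n + 1) := by
  have term : ∀ k : ℕ, ((n + 1).choose k : ℝ) * |(k : ℝ) / (n + 1) - 1 / 2| =
      ((n + 1).choose k : ℝ) * |(n + 1 : ℝ) - 2 * k| / (2 * (n + 1)) := by
    intro k
    rw [show (k : ℝ) / (n + 1) - 1 / 2 = -(((n + 1 : ℝ) - 2 * k) / (2 * (n + 1))) by
        field_simp; ring,
      abs_neg, abs_div, abs_of_pos (by positivity : (0 : ℝ) < 2 * (n + 1))]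
    ring
  unfold countingLoss
  push_cast
  rw [sum_congr rfl fun k _ ↦ term k, ← sum_div, Nat.sum_range_choose_mul_abs_sub_two_mul_s4,
    rpow_neg (by norm_num), ← Nat.cast_add_one, rpow_natCast]
  field_simp

theorem counting_loss_even_step (i : ℕ) (hi : 0 < i) (heven : Even i) :
    countingLoss i = countingLoss (i + 1) := by
  obtain ⟨j, rfl⟩ : ∃ j, i = 2 * j + 2 := by
    obtain ⟨m, rfl⟩ := heven
    exact ⟨m - 1, by omega⟩
  have middle : (2 * j + 2).choose (j + 1) = 2 * (2 * j + 1).choose (j + 1) := by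
    rw [Nat.choose_succ_succ', Nat.choose_symm_half]
    ring
  rw [countingLoss_add_one, countingLoss_add_one, show (2 * j + 1 + 1) / 2 = j + 1 by omega,
    show (2 * j + 2 + 1) / 2 = j + 1 by omega, middle]
  push_cast
  ring
end
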